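/- arXiv:2511.21913 — 3 statements merged into one kernel-verified Lean document; each statement's English description precedes it below -/
import Mathlib

section
/- Let C be a regular category with pullbacks and p : E → B a morphism. The endofunctor T = p* ∘ p_! of C/E preserves kernel pairs. -/
open CategoryTheory CategoryTheory.Limits

/-! `p_!` preserves pullbacks because the forgetful functors to `C` create them, and `p*` is a
right adjoint; so the composite `p* ∘ p_!` preserves pullbacks, and kernel pairs in particular. -/

namespace CategoryTheory.Over

theorem isPullback_map {C : Type*} [Category C] {X Y : C} (p : X ⟶ Y)
    {P U V W : Over X} {fst : P ⟶ U} {snd : P ⟶ V} {f : U ⟶ W} {g : V ⟶ W}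
    (h : IsPullback fst snd f g) :
    IsPullback ((map p).map fst) ((map p).map snd) ((map p).map f) ((map p).map g) :=
  IsPullback.of_map (forget Y) (by simp only [← Functor.map_comp, h.w]) (h.map (forget X))

end CategoryTheory.Over

theorem stmt_12_general (C : Type*) [Category C] [HasFiniteLimits C]
    {E B : C} (p : E ⟶ B) :
    ∀ {R A A' : Over E} (f : A ⟶ A') (a b : R ⟶ A), IsKernelPair f a b →
      IsKernelPair ((Over.map p ⋙ Over.pullback p).map f)
        ((Over.map p ⋙ Over.pullback p).map a) ((Over.map p ⋙ Over.pullback p).map b) :=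
  fun _ _ _ h => (Over.isPullback_map p h).map (Over.pullback p)

/-- If `C` is a regular category and `p : E ⟶ B` a morphism, then the endofunctor
`T = p* ∘ p_!` of `C/E` preserves kernel pairs. -/
theorem stmt_12 (C : Type*) [Category C] [HasFiniteLimits C]
    (hcoeq : ∀ {X Y : C} (f : X ⟶ Y), HasCoequalizer (pullback.fst f f) (pullback.snd f f))
    (hstab : ∀ {X Y Z : C} (f : X ⟶ Y) (g : Z ⟶ Y) (_ : RegularEpi f),
      Nonempty (RegularEpi (pullback.snd f g)))
    {E B : C} (p : E ⟶ B) :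
    ∀ {R A A' : Over E} (f : A ⟶ A') (a b : R ⟶ A), IsKernelPair f a b →
      IsKernelPair ((Over.map p ⋙ Over.pullback p).map f)
        ((Over.map p ⋙ Over.pullback p).map a) ((Over.map p ⋙ Over.pullback p).map b) :=
  stmt_12_general C p
end

section
/- Let X be a regular category. If U : A → X is a monadic functor whose associated monad has an underlying endofunctor preserving regular epimorphisms, then A (equivalently, the Eilenberg–Moore category of the monad) is a regular category. -/
open CategoryTheory CategoryTheory.Limits

/-! Factor the underlying map of an algebra morphism `f` as the coequalizer `e` of its kernel pair
followed by a mono `m`. Since `T e` is a strong epi and `T (T e)` an epi, the diagonal fill-in of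
the square `(T e, m)` is an algebra structure on the image, so `f = e ≫ m` is a factorisation of
algebras. An algebra morphism whose underlying map is a regular epi is a regular epi of algebras,
because `T` keeps that map epi and the induced map out of the coequalizer is checked to be an
algebra morphism after cancelling it; conversely, a regular epi of algebras has invertible mono
part. So an algebra morphism is a regular epi iff its underlying map is one, and coequalizers of
kernel pairs and pullback stability transfer from `X` along the forgetful functor, which creates
limits. -/

namespace CategoryTheory

theorem Regular.of_hasCoequalizer_pullback {C : Type*} [Category C] [HasFiniteLimits C]
    (hcoeq : ∀ {A B : C} (f : A ⟶ B), HasCoequalizer (pullback.fst f f) (pullback.snd f f))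
    (hstab : ∀ {A B Z : C} (f : A ⟶ B) (g : Z ⟶ B), IsRegularEpi f →
      IsRegularEpi (pullback.snd f g)) :
    Regular C where
  hasCoequalizer_of_isKernelPair {_ _ _ f g₁ g₂} h :=
    have := hcoeq f
    hasColimit_of_iso <| parallelPairIso g₁ g₂ (pullback.fst f f) (pullback.snd f f)
      h.isoPullback (Iso.refl _) (by simp) (by simp)
  regularEpiIsStableUnderBaseChange :=
    .of_forall_exists_isPullback fun f g _ hg =>
      ⟨_, _, _, (IsPullback.of_hasPullback g f).flip, hstab g f hg⟩

namespace Monad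

variable {C : Type*} [Category C] {T : Monad C}

section LiftMonoFactorisation

variable {A B : T.Algebra} {f : A ⟶ B} (F : MonoFactorisation f.f)

lemma commSq_monoFactorisation :
    CommSq (A.a ≫ F.e) (T.map F.e) F.m (T.map F.m ≫ B.a) :=
  ⟨by rw [Category.assoc, F.fac, ← Functor.map_comp_assoc, F.fac, f.h]⟩

variable [Epi F.e] [StrongEpi (T.map F.e)] [Epi (T.map (T.map F.e))]

noncomputable def algebraOfMonoFactorisation : T.Algebra where
  A := F.I
  a := (commSq_monoFactorisation F).lift
  unit := by
    have := T.η.naturality F.e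
    simp only [Functor.id_obj, Functor.id_map] at this
    rw [← cancel_epi F.e]
    simp [reassoc_of% this, A.unit_assoc]
  assoc := by
    have := T.μ.naturality F.e
    simp only [Functor.comp_obj, Functor.comp_map] at this
    rw [← cancel_epi (T.map (T.map F.e))]
    simp [reassoc_of% this, A.assoc_assoc, ← Functor.map_comp_assoc]

noncomputable def liftMonoFactorisation : MonoFactorisation f where
  I := algebraOfMonoFactorisation F
  m := ⟨F.m, (commSq_monoFactorisation F).fac_right.symm⟩
  m_mono := algebra_mono_of_mono T _ (h := F.m_mono)
  e := ⟨F.e, (commSq_monoFactorisation F).fac_left⟩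
  fac := by ext; exact F.fac

end LiftMonoFactorisation

theorem hasFiniteLimits_algebra [HasFiniteLimits C] : HasFiniteLimits T.Algebra :=
  hasFiniteLimits_of_hasLimitsLimits_of_createsFiniteLimits (forget T)

theorem isRegularEpi_of_isRegularEpi_f [HasPullbacks C] {A B : T.Algebra} (f : A ⟶ B)
    [IsRegularEpi f.f] [Epi (T.map f.f)] : IsRegularEpi f := by
  have : HasPullbacks T.Algebra :=
    hasLimitsOfShape_of_hasLimitsOfShape_createsLimitsOfShape (forget T)
  have := algebra_epi_of_epi T f
  have hkp : IsKernelPair f.f (pullback.fst f f).f (pullback.snd f f).f :=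
    (IsPullback.of_hasPullback f f).map (forget T)
  refine IsRegularEpi.of_epi_of_exists fun Z g hg => ?_
  have hg' : (pullback.fst f f).f ≫ g.f = (pullback.snd f f).f ≫ g.f :=
    congrArg Algebra.Hom.f hg
  let d := (isColimitCoforkOfEffectiveEpi f.f _ hkp.isLimit).desc (Cofork.ofπ g.f hg')
  have hd : f.f ≫ d = g.f := (isColimitCoforkOfEffectiveEpi f.f _ hkp.isLimit).fac _ .one
  refine ⟨⟨d, ?_⟩, by ext; exact hd⟩
  rw [← cancel_epi (T.map f.f), ← Functor.map_comp_assoc, hd, g.h, ← hd, ← f.h_assoc]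

section Regular

variable [Regular C]
  (hT : ∀ ⦃X Y : C⦄ (f : X ⟶ Y), IsRegularEpi f → IsRegularEpi (T.map f))
include hT

noncomputable def imageFactorisation {A B : T.Algebra} (f : A ⟶ B) : MonoFactorisation f :=
  let F := Regular.strongEpiMonoFactorisation f.f
  have := hT F.e inferInstance
  have := hT (T.map F.e) this
  liftMonoFactorisation F.toMonoFactorisation

instance isRegularEpi_imageFactorisation_e_f {A B : T.Algebra} (f : A ⟶ B) :
    IsRegularEpi (imageFactorisation hT f).e.f :=
  inferInstanceAs (IsRegularEpi (Regular.strongEpiMonoFactorisation f.f).e)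

theorem isRegularEpi_imageFactorisation_e {A B : T.Algebra} (f : A ⟶ B) :
    IsRegularEpi (imageFactorisation hT f).e :=
  have := hT _ (isRegularEpi_imageFactorisation_e_f hT f)
  isRegularEpi_of_isRegularEpi_f _

theorem isRegularEpi_iff_isRegularEpi_f {A B : T.Algebra} (f : A ⟶ B) :
    IsRegularEpi f ↔ IsRegularEpi f.f := by
  refine ⟨fun _ => ?_, fun hf => have := hT _ hf; isRegularEpi_of_isRegularEpi_f f⟩
  let F := imageFactorisation hT f
  have : StrongEpi (F.e ≫ F.m) := by rw [F.fac]; infer_instance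
  have : StrongEpi F.m := strongEpi_of_strongEpi F.e F.m
  have : IsIso F.m := isIso_of_mono_of_strongEpi F.m
  have : IsIso F.m.f := inferInstanceAs (IsIso ((forget T).map F.m))
  have : StrongEpi f.f := by
    rw [← F.fac, Algebra.comp_f]
    exact strongEpi_comp _ _
  exact Regular.isRegularEpi_of_extremalEpi f.f

theorem regular_algebra : Regular T.Algebra where
  toHasFiniteLimits := hasFiniteLimits_algebra
  hasCoequalizer_of_isKernelPair {_ _ _ f _ _} h :=
    have := isRegularEpi_imageFactorisation_e hT f
    let F := imageFactorisation hT f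
    ⟨⟨⟨_, isColimitCoforkOfEffectiveEpi F.e _
      (IsKernelPair.cancel_right_of_mono (f₂ := F.m) (by rwa [F.fac])).isLimit⟩⟩⟩
  regularEpiIsStableUnderBaseChange := ⟨fun sq hg => by
    rw [MorphismProperty.regularEpi, isRegularEpi_iff_isRegularEpi_f hT] at hg ⊢
    exact Regular.regularEpiIsStableUnderBaseChange.of_isPullback (sq.map (forget T)) hg⟩

end Regular

end Monad

end CategoryTheory

/-- If `X` is a regular category (finitely complete, with coequalizers of kernel pairs,
and regular epis stable under pullback) and `T` is a monad on `X` whose underlying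
endofunctor preserves regular epimorphisms, then the Eilenberg–Moore category of
`T`-algebras is regular. -/
theorem stmt_15 (X : Type*) [Category X] [HasFiniteLimits X]
    (hcoeq : ∀ {A B : X} (f : A ⟶ B), HasCoequalizer (pullback.fst f f) (pullback.snd f f))
    (hstab : ∀ {A B Z : X} (f : A ⟶ B) (g : Z ⟶ B) (_ : RegularEpi f),
      Nonempty (RegularEpi (pullback.snd f g)))
    (T : Monad X)
    (hrepi : ∀ {A B : X} (f : A ⟶ B) (_ : RegularEpi f), Nonempty (RegularEpi (T.map f))) :
    HasFiniteLimits T.Algebra ∧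
    (∀ [HasFiniteLimits T.Algebra],
      (∀ {A B : T.Algebra} (f : A ⟶ B),
        HasCoequalizer (pullback.fst f f) (pullback.snd f f)) ∧
      (∀ {A B Z : T.Algebra} (f : A ⟶ B) (g : Z ⟶ B) (_ : RegularEpi f),
        Nonempty (RegularEpi (pullback.snd f g)))) := by
  have : Regular X := Regular.of_hasCoequalizer_pullback hcoeq fun f g ⟨⟨hf⟩⟩ => ⟨hstab f g hf⟩
  have : Regular T.Algebra := Monad.regular_algebra fun _ _ f ⟨⟨hf⟩⟩ => ⟨hrepi f hf⟩
  refine ⟨inferInstance, fun f => ?_, fun f g hf => ?_⟩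
  · exact Regular.hasCoequalizer_of_isKernelPair (IsKernelPair.of_hasPullback f)
  · have := isRegularEpi_of_regularEpi hf
    exact IsRegularEpi.regularEpi
end

section
/- Let A, B, C be categories and suppose G : A → B and H : B → C are functors such that H ∘ G is monadic and H is conservative (reflects isomorphisms), with G having a left adjoint. Then G is monadic. -/
/-!
A `G`-split pair is also `G ⋙ H`-split, so the monadic functor `G ⋙ H` creates its coequalizer.
Split coequalizers are absolute, so `H` preserves the image of this coequalizer under `G`, and,
being conservative, also reflects it. Hence `A` has, and `G` preserves and reflects, coequalizers
of `G`-split pairs, and Beck's theorem shows that `G` is monadic.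
-/

open CategoryTheory Limits

namespace CategoryTheory

namespace Monad

variable {A B : Type*} [Category A] [Category B] {F : B ⥤ A} {G : A ⥤ B} (adj : F ⊣ G)

instance isSplitPair_map_a_counit (X : adj.toMonad.Algebra) :
    G.IsSplitPair (F.map X.a) (adj.counit.app (F.obj X.A)) :=
  ⟨_, _, ⟨beckSplitCoequalizer X⟩⟩

def counitCofork (Y : A) :
    Cofork (F.map (G.map (adj.counit.app Y))) (adj.counit.app (F.obj (G.obj Y))) :=
  Cofork.ofπ (P := Y) (adj.counit.app Y) (adj.counit_naturality _)

lemma faithful_of_isColimit_counitCofork (hε : ∀ Y, IsColimit (counitCofork adj Y)) :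
    G.Faithful :=
  have (Y : A) : Epi (adj.counit.app Y) := ⟨fun _ _ h => Cofork.IsColimit.hom_ext (hε Y) h⟩
  adj.faithful_R_of_epi_counit_app

lemma comparison_full_of_isColimit_counitCofork (hε : ∀ Y, IsColimit (counitCofork adj Y)) :
    (comparison adj).Full where
  map_surjective {Y Y'} φ := by
    let g : G.obj Y ⟶ G.obj Y' := φ.f
    have hg : G.map (F.map g ≫ adj.counit.app Y') = G.map (adj.counit.app Y) ≫ g := by
      rw [G.map_comp]
      exact φ.h
    obtain ⟨f, hf⟩ : ∃ f : Y ⟶ Y', adj.counit.app Y ≫ f = F.map g ≫ adj.counit.app Y' :=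
      ⟨_, (Cofork.IsColimit.desc' (hε Y) (F.map g ≫ adj.counit.app Y') (by
        change F.map (G.map (adj.counit.app Y)) ≫ _ = adj.counit.app (F.obj (G.obj Y)) ≫ _
        rw [← F.map_comp_assoc, ← hg]
        simp)).2⟩
    refine ⟨f, Algebra.Hom.ext ?_⟩
    change G.map f = g
    have key := congrArg (adj.homEquiv (G.obj Y) Y') hf
    rwa [adj.homEquiv_unit, G.map_comp, adj.right_triangle_components_assoc,
      adj.homEquiv_naturality_left, adj.homEquiv_unit, adj.right_triangle_components,
      Category.comp_id] at key

noncomputable def comparisonObjIsoOfIsColimit (X : adj.toMonad.Algebra) {P : A}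
    {π : F.obj X.A ⟶ P} (w : F.map X.a ≫ π = adj.counit.app (F.obj X.A) ≫ π)
    (h : IsColimit (Cofork.ofπ (G.map π) (by rw [← G.map_comp, w]; exact G.map_comp _ _) :
      Cofork (G.map (F.map X.a)) (G.map (adj.counit.app (F.obj X.A))))) :
    (comparison adj).obj P ≅ X := by
  -- `X.a` is a coequalizer of the same pair by Beck's split fork.
  let i : X.A ≅ G.obj P := IsColimit.coconePointUniqueUpToIso (beckCoequalizer X) h
  have hi : X.a ≫ i.hom = G.map π :=
    IsColimit.comp_coconePointUniqueUpToIso_hom (beckCoequalizer X) h WalkingParallelPair.one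
  have hπ : (adj.homEquiv X.A P).symm i.hom = π := by
    rw [Equiv.symm_apply_eq, adj.homEquiv_unit, ← hi]
    exact (X.unit_assoc i.hom).symm
  refine (Algebra.isoMk i ?_).symm
  change G.map (F.map i.hom) ≫ G.map (adj.counit.app P) = X.a ≫ i.hom
  rw [← G.map_comp]
  change G.map ((adj.homEquiv X.A P).symm i.hom) = X.a ≫ i.hom
  rw [hπ, hi]

lemma comparison_essSurj
    [∀ X : adj.toMonad.Algebra, HasCoequalizer (F.map X.a) (adj.counit.app (F.obj X.A))]
    [∀ X : adj.toMonad.Algebra,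
      PreservesColimit (parallelPair (F.map X.a) (adj.counit.app (F.obj X.A))) G] :
    (comparison adj).EssSurj where
  mem_essImage X :=
    ⟨_, ⟨comparisonObjIsoOfIsColimit adj X (coequalizer.condition _ _)
      (isColimitOfHasCoequalizerOfPreservesColimit G _ _)⟩⟩

/-- Beck's theorem, as `Monad.monadicOfHasPreservesReflectsGSplitCoequalizers` but without
requiring `A` and `B` to have the same morphism universe. -/
lemma comparison_isEquivalence_of_isSplitPair
    (hasCoequalizer : ∀ ⦃X Y : A⦄ (f g : X ⟶ Y) [G.IsSplitPair f g], HasCoequalizer f g)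
    (preserves : ∀ ⦃X Y : A⦄ (f g : X ⟶ Y) [G.IsSplitPair f g],
      PreservesColimit (parallelPair f g) G)
    (reflects : ∀ ⦃X Y : A⦄ (f g : X ⟶ Y) [G.IsSplitPair f g],
      ReflectsColimit (parallelPair f g) G) :
    (comparison adj).IsEquivalence :=
  have hε (Y : A) : IsColimit (counitCofork adj Y) :=
    have : G.IsSplitPair (F.map (G.map (adj.counit.app Y))) (adj.counit.app (F.obj (G.obj Y))) :=
      isSplitPair_map_a_counit adj ((comparison adj).obj Y)
    have := reflects (F.map (G.map (adj.counit.app Y))) (adj.counit.app (F.obj (G.obj Y)))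
    isColimitOfIsColimitCoforkMap G _ (beckCoequalizer ((comparison adj).obj Y))
  have := faithful_of_isColimit_counitCofork adj hε
  have (X : adj.toMonad.Algebra) := hasCoequalizer (F.map X.a) (adj.counit.app (F.obj X.A))
  have (X : adj.toMonad.Algebra) := preserves (F.map X.a) (adj.counit.app (F.obj X.A))
  { full := comparison_full_of_isColimit_counitCofork adj hε
    essSurj := comparison_essSurj adj }

end Monad

section SplitPairs

variable {A B C : Type*} [Category A] [Category B] [Category C]
  {X Y : A} (f g : X ⟶ Y) (G : A ⥤ B)

def parallelPairCompIso : parallelPair f g ⋙ G ≅ parallelPair (G.map f) (G.map g) :=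
  diagramIsoParallelPair _

variable [G.IsSplitPair f g]

instance Functor.isSplitPair_comp (H : B ⥤ C) : (G ⋙ H).IsSplitPair f g :=
  inferInstanceAs (HasSplitCoequalizer (H.map (G.map f)) (H.map (G.map g)))

instance hasColimit_parallelPair_comp_of_isSplitPair : HasColimit (parallelPair f g ⋙ G) :=
  hasColimit_of_iso (parallelPairCompIso f g G)

instance preservesColimit_parallelPair_comp_of_isSplitPair (H : B ⥤ C) :
    PreservesColimit (parallelPair f g ⋙ G) H :=
  preservesColimit_of_iso_diagram H (parallelPairCompIso f g G).symm

noncomputable abbrev createsColimitOfIsSplitPairOfMonadic [MonadicRightAdjoint G] :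
    CreatesColimit (parallelPair f g) G :=
  have : PreservesColimit ((parallelPair f g ⋙ G) ⋙ monadicLeftAdjoint G ⋙ G)
      (monadicLeftAdjoint G ⋙ G) :=
    preservesColimit_parallelPair_comp_of_isSplitPair f g
      (G ⋙ monadicLeftAdjoint G ⋙ G) (monadicLeftAdjoint G ⋙ G)
  monadicCreatesColimitOfPreservesColimit _ _

lemma hasCoequalizer_of_isSplitPair_of_monadic_comp (H : B ⥤ C) [MonadicRightAdjoint (G ⋙ H)] :
    HasCoequalizer f g :=
  have := createsColimitOfIsSplitPairOfMonadic f g (G ⋙ H)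
  hasColimit_of_created (parallelPair f g) (G ⋙ H)

lemma reflectsColimit_of_isSplitPair_of_monadic_comp (H : B ⥤ C) [MonadicRightAdjoint (G ⋙ H)] :
    ReflectsColimit (parallelPair f g) G where
  reflects hc :=
    have := createsColimitOfIsSplitPairOfMonadic f g (G ⋙ H)
    ⟨isColimitOfReflects (G ⋙ H) (isColimitOfPreserves H hc)⟩

lemma preservesColimit_of_isSplitPair_of_monadic_comp (H : B ⥤ C) [MonadicRightAdjoint (G ⋙ H)]
    [H.ReflectsIsomorphisms] :
    PreservesColimit (parallelPair f g) G :=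
  have := createsColimitOfIsSplitPairOfMonadic f g (G ⋙ H)
  have := preservesColimit_of_createsColimit_and_hasColimit (parallelPair f g) (G ⋙ H)
  have := reflectsColimit_of_reflectsIsomorphisms (parallelPair f g ⋙ G) H
  preservesColimit_of_reflects_of_preserves G H

end SplitPairs

end CategoryTheory

open CategoryTheory

/-- If `H ∘ G` is monadic, `H` is conservative and `G` has a left adjoint,
then `G` is monadic. -/
theorem stmt_17 {A B C : Type*} [Category A] [Category B] [Category C]
    (G : A ⥤ B) (H : B ⥤ C) [MonadicRightAdjoint (G ⋙ H)]
    [H.ReflectsIsomorphisms] [G.IsRightAdjoint] :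
    Nonempty (MonadicRightAdjoint G) :=
  ⟨{ L := G.leftAdjoint
     adj := Adjunction.ofIsRightAdjoint G
     eqv := Monad.comparison_isEquivalence_of_isSplitPair _
      (fun _ _ f g _ => hasCoequalizer_of_isSplitPair_of_monadic_comp f g G H)
      (fun _ _ f g _ => preservesColimit_of_isSplitPair_of_monadic_comp f g G H)
      (fun _ _ f g _ => reflectsColimit_of_isSplitPair_of_monadic_comp f g G H) }⟩
end
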